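/- arXiv:1910.11835 — 9 statements merged into one kernel-verified Lean document; each statement's English description precedes it below -/
import Mathlib

section
/- For all natural numbers m and n with gcd(m,n) = 1, one has a(m)·a(n) ≤ a(mn). -/
/-- The sum of the small divisors of `n`, i.e. the divisors `d` of `n` with `d^2 ≤ n`. -/
def smallDivSum (n : ℕ) : ℕ := ∑ d ∈ n.divisors.filter (fun d => d ^ 2 ≤ n), d

/-! For coprime `m` and `n`, `(d, e) ↦ d * e` maps pairs of small divisors of `m` and `n`
injectively to small divisors of `m * n`, so the product of the two sums is a subsum of
`smallDivSum (m * n)`. -/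

open Finset

def smallDivisors (n : ℕ) : Finset ℕ := n.divisors.filter (fun d => d ^ 2 ≤ n)

lemma smallDivisors_subset_divisors (n : ℕ) : smallDivisors n ⊆ n.divisors :=
  filter_subset _ _

lemma mul_mem_smallDivisors {m n d e : ℕ} (hd : d ∈ smallDivisors m)
    (he : e ∈ smallDivisors n) : d * e ∈ smallDivisors (m * n) := by
  simp only [smallDivisors, mem_filter, Nat.mem_divisors] at hd he ⊢
  obtain ⟨⟨hdm, hm⟩, hd2⟩ := hd
  obtain ⟨⟨hen, hn⟩, he2⟩ := he
  exact ⟨⟨mul_dvd_mul hdm hen, mul_ne_zero hm hn⟩, mul_pow d e 2 ▸ Nat.mul_le_mul hd2 he2⟩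

lemma image_mul_smallDivisors_subset (m n : ℕ) :
    (smallDivisors m ×ˢ smallDivisors n).image (fun p : ℕ × ℕ ↦ p.1 * p.2) ⊆
      smallDivisors (m * n) := by
  simp only [image_subset_iff, mem_product]
  exact fun p hp ↦ mul_mem_smallDivisors hp.1 hp.2

theorem smallDivSum_supermultiplicative (m n : ℕ) (h : Nat.gcd m n = 1) :
    smallDivSum m * smallDivSum n ≤ smallDivSum (m * n) := by
  have hinj : Set.InjOn (fun p : ℕ × ℕ ↦ p.1 * p.2) ↑(smallDivisors m ×ˢ smallDivisors n) :=
    (Nat.Coprime.mul_injOn_divisors h).mono <| coe_subset.mpr <|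
      product_subset_product (smallDivisors_subset_divisors m) (smallDivisors_subset_divisors n)
  calc smallDivSum m * smallDivSum n
      = ∑ p ∈ smallDivisors m ×ˢ smallDivisors n, p.1 * p.2 := by
        rw [sum_product]; exact sum_mul_sum _ _ _ _
    _ = ∑ d ∈ (smallDivisors m ×ˢ smallDivisors n).image (fun p : ℕ × ℕ ↦ p.1 * p.2), d :=
        (sum_image (f := id) hinj).symm
    _ ≤ smallDivSum (m * n) := sum_le_sum_of_subset (image_mul_smallDivisors_subset m n)
end

section
/- There exists a constant C > 0 such that for all natural numbers n ≥ 2, |∑_{k=1}^{n} a(k) − (2/3)·n^{3/2}| ≤ C·n·log n. -/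
/-!
Writing a small divisor of `k ≤ n` as `d` with `k = d * m`, `d ≤ m`, each `d ≤ D = ⌊√n⌋`
contributes `d` to the partial sum once for every `m ∈ [d, n / d]`, so it equals
`∑_{d ≤ D} d (⌊n/d⌋ + 1 - d) = n D + (D - D³) / 3 - ∑_{d ≤ D} (n mod d)`.
The remainder is at most `D² ≤ n`, and with `x = √n` the main term satisfies
`(2/3) x³ - (x² D - D³/3) = (x - D)² (2x + D) / 3 ≤ x` because `0 ≤ x - D < 1`.
So the error is even `O(n)`.
-/

open Finset

theorem sum_Icc_smallDivSum_eq_sum_card (n : ℕ) :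
    ∑ k ∈ Icc 1 n, smallDivSum k
      = ∑ d ∈ Icc 1 n.sqrt, #{k ∈ Icc 1 n | d ∣ k ∧ d ^ 2 ≤ k} * d := by
  simp only [smallDivSum, card_eq_sum_ones, sum_mul, one_mul]
  refine sum_comm' fun k d => ?_
  simp only [mem_Icc, mem_filter, Nat.mem_divisors, Nat.le_sqrt']
  constructor
  · rintro ⟨⟨hk, hkn⟩, ⟨hdk, -⟩, hd⟩
    exact ⟨⟨⟨hk, hkn⟩, hdk, hd⟩, Nat.pos_of_dvd_of_pos hdk hk, hd.trans hkn⟩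
  · rintro ⟨⟨⟨hk, hkn⟩, hdk, hd⟩, -⟩
    exact ⟨⟨hk, hkn⟩, ⟨hdk, by omega⟩, hd⟩

theorem card_filter_dvd_sq_le {d : ℕ} (n : ℕ) (hd : 0 < d) :
    #{k ∈ Icc 1 n | d ∣ k ∧ d ^ 2 ≤ k} = n / d + 1 - d := by
  have hmultiples : {k ∈ Icc 1 n | d ∣ k ∧ d ^ 2 ≤ k} = (Icc d (n / d)).image (d * ·) := by
    ext k
    simp only [mem_filter, mem_Icc, mem_image, Nat.le_div_iff_mul_le hd]
    constructor
    · rintro ⟨⟨hk, hkn⟩, ⟨m, rfl⟩, hd2⟩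
      exact ⟨m, ⟨by nlinarith, by linarith [mul_comm d m]⟩, rfl⟩
    · rintro ⟨m, ⟨hdm, hmn⟩, rfl⟩
      exact ⟨⟨by nlinarith, by linarith [mul_comm d m]⟩, dvd_mul_right d m, by nlinarith⟩
  rw [hmultiples, card_image_of_injective _ (mul_right_injective₀ hd.ne'), Nat.card_Icc]

theorem sum_Icc_add_sub_sq (a : ℝ) (D : ℕ) :
    ∑ d ∈ Icc 1 D, (a + d - d ^ 2 : ℝ) = a * D + (D - D ^ 3) / 3 := by
  induction D with
  | zero => simp
  | succ D ih => rw [sum_Icc_succ_top (by omega), ih]; push_cast; ring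

theorem sum_Icc_mod_le (n D : ℕ) : ∑ d ∈ Icc 1 D, n % d ≤ D ^ 2 := by
  calc ∑ d ∈ Icc 1 D, n % d ≤ #(Icc 1 D) • D :=
        sum_le_card_nsmul _ _ _ fun d hd => by
          rw [mem_Icc] at hd; exact (Nat.mod_lt n (by omega)).le.trans hd.2
    _ = D ^ 2 := by simp [sq]

theorem sum_Icc_smallDivSum_eq (n : ℕ) :
    ∑ k ∈ Icc 1 n, (smallDivSum k : ℝ)
      = n * n.sqrt + (n.sqrt - n.sqrt ^ 3 : ℝ) / 3 - ((∑ d ∈ Icc 1 n.sqrt, n % d : ℕ) : ℝ) := by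
  rw [← sum_Icc_add_sub_sq, ← Nat.cast_sum, sum_Icc_smallDivSum_eq_sum_card, Nat.cast_sum,
    Nat.cast_sum, ← sum_sub_distrib]
  refine sum_congr rfl fun d hd => ?_
  rw [mem_Icc, Nat.le_sqrt] at hd
  have hdn : d ≤ n / d := (Nat.le_div_iff_mul_le hd.1).2 hd.2
  have hdiv : ((d * (n / d) : ℕ) : ℝ) + (n % d : ℕ) = n := by exact_mod_cast Nat.div_add_mod n d
  rw [card_filter_dvd_sq_le n hd.1, Nat.cast_mul, Nat.cast_sub (by omega)]
  push_cast at hdiv ⊢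
  linear_combination hdiv

theorem abs_sq_mul_sub_cube_div_three_sub_le {x D : ℝ} (hD : 0 ≤ D) (hDx : D ≤ x)
    (hxD : x ≤ D + 1) : |x ^ 2 * D - D ^ 3 / 3 - 2 / 3 * x ^ 3| ≤ x := by
  have hgap : 2 / 3 * x ^ 3 - (x ^ 2 * D - D ^ 3 / 3) = (x - D) ^ 2 * (2 * x + D) / 3 := by ring
  have hsq : (x - D) ^ 2 ≤ 1 := by nlinarith
  rw [abs_sub_comm, abs_of_nonneg (by nlinarith), hgap]
  nlinarith

theorem abs_sum_Icc_smallDivSum_sub_le (n : ℕ) :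
    |∑ k ∈ Icc 1 n, (smallDivSum k : ℝ) - 2 / 3 * √n ^ 3| ≤ 3 * (n : ℝ) := by
  have hDx : (n.sqrt : ℝ) ≤ √n := Real.nat_sqrt_le_real_sqrt
  have hcubic := abs_sq_mul_sub_cube_div_three_sub_le (by positivity) hDx
    Real.real_sqrt_lt_nat_sqrt_succ.le
  rw [Real.sq_sqrt n.cast_nonneg] at hcubic
  have hR : ((∑ d ∈ Icc 1 n.sqrt, n % d : ℕ) : ℝ) ≤ n.sqrt ^ 2 := by
    exact_mod_cast sum_Icc_mod_le n n.sqrt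
  have hDn : (n.sqrt : ℝ) ^ 2 ≤ n := by exact_mod_cast Nat.sqrt_le' n
  have hxn : √n ≤ n := Real.sqrt_le_self_iff.2 <| by
    rcases n.eq_zero_or_pos with hn | hn
    · exact .inl (by simp [hn])
    · exact .inr (by exact_mod_cast hn)
  rw [sum_Icc_smallDivSum_eq, abs_le]
  rw [abs_le] at hcubic
  constructor <;> linarith [Nat.cast_nonneg (α := ℝ) n.sqrt]

theorem smallDivSum_partial_sum_asymptotic :
    ∃ C : ℝ, 0 < C ∧ ∀ n : ℕ, 2 ≤ n →
      |(∑ k ∈ Finset.Icc 1 n, (smallDivSum k : ℝ)) - (2 / 3) * (n : ℝ) ^ ((3 : ℝ) / 2)|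
        ≤ C * (n : ℝ) * Real.log n := by
  refine ⟨6, by norm_num, fun n hn => ?_⟩
  have hn2 : (2 : ℝ) ≤ n := by exact_mod_cast hn
  have hlog : 1 / 2 < Real.log n :=
    (Real.log_two_gt_d9.trans_le' (by norm_num)).trans_le (Real.log_le_log two_pos hn2)
  rw [Real.rpow_div_two_eq_sqrt _ n.cast_nonneg, Real.rpow_ofNat]
  calc _ ≤ 3 * (n : ℝ) := abs_sum_Icc_smallDivSum_sub_le n
    _ ≤ 6 * n * Real.log n := by nlinarith
end

section
/- The function a(n) has average order √n; that is, (∑_{k=1}^{n} a(k)) / (∑_{k=1}^{n} √k) tends to 1 as n → ∞. Equivalently, ∑_{k=1}^{n} a(k) is asymptotic to (2/3)·n^{3/2}. -/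
/-!
Swapping the order of summation, `∑_{k ≤ n} a(k) = ∑_{d ≤ √n} d · #{j : d ≤ j ≤ n / d}`, and
`d · (⌊n/d⌋ + 1 - d) = n - d² + O(d)`. Summing over `d ≤ s = ⌊√n⌋` gives
`s n - s³/3 + O(n) = (2/3) n^{3/2} + O(n)`. Comparing with `∫₀ⁿ √x dx` gives
`∑_{k ≤ n} √k = (2/3) n^{3/2} + O(√n)`, so both sums are asymptotic to `(2/3) n^{3/2}`.
-/

open Filter

open Finset Asymptotics

theorem filter_dvd_and_sq_le_eq_image {n d : ℕ} (hd : 0 < d) :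
    {k ∈ Icc 1 n | d ∣ k ∧ d ^ 2 ≤ k} = (Icc d (n / d)).image (d * ·) := by
  ext k
  simp only [mem_filter, mem_Icc, mem_image, Nat.le_div_iff_mul_le hd]
  constructor
  · rintro ⟨⟨-, hkn⟩, ⟨j, rfl⟩, hdj⟩
    exact ⟨j, ⟨le_of_mul_le_mul_left (by nlinarith) hd, by linarith⟩, rfl⟩
  · rintro ⟨j, ⟨hdj, hjn⟩, rfl⟩
    exact ⟨⟨by nlinarith, by linarith⟩, dvd_mul_right d j, by nlinarith⟩

theorem card_filter_dvd_and_sq_le {n d : ℕ} (hd : 0 < d) :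
    #{k ∈ Icc 1 n | d ∣ k ∧ d ^ 2 ≤ k} = n / d + 1 - d := by
  rw [filter_dvd_and_sq_le_eq_image hd, card_image_of_injective _ (mul_right_injective₀ hd.ne'),
    Nat.card_Icc]

theorem sum_smallDivSum_eq (n : ℕ) :
    ∑ k ∈ Icc 1 n, smallDivSum k = ∑ d ∈ Icc 1 n.sqrt, d * (n / d + 1 - d) := by
  simp only [smallDivSum]
  rw [sum_comm' (t' := Icc 1 n.sqrt) (s' := fun d => {k ∈ Icc 1 n | d ∣ k ∧ d ^ 2 ≤ k})]
  · refine sum_congr rfl fun d hd => ?_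
    rw [sum_const, smul_eq_mul, mul_comm, card_filter_dvd_and_sq_le (mem_Icc.1 hd).1]
  · intro k d
    simp only [mem_Icc, mem_filter, Nat.mem_divisors, Nat.le_sqrt']
    constructor
    · rintro ⟨⟨hk, hkn⟩, ⟨hdk, -⟩, hdk2⟩
      exact ⟨⟨⟨hk, hkn⟩, hdk, hdk2⟩, Nat.pos_of_dvd_of_pos hdk hk, hdk2.trans hkn⟩
    · rintro ⟨⟨⟨hk, hkn⟩, hdk, hdk2⟩, -⟩
      exact ⟨⟨hk, hkn⟩, ⟨hdk, by omega⟩, hdk2⟩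

theorem mul_div_add_one_sub_add_sq {n d : ℕ} (hd : 0 < d) (hdn : d ^ 2 ≤ n) :
    d * (n / d + 1 - d) + d ^ 2 = d * (n / d) + d := by
  have : d ≤ n / d := (Nat.le_div_iff_mul_le hd).2 (by nlinarith)
  rw [sq, ← mul_add, Nat.sub_add_cancel (by omega), mul_add_one]

theorem sum_smallDivSum_add_sum_sq_mem_Icc (n : ℕ) :
    ∑ k ∈ Icc 1 n, smallDivSum k + ∑ d ∈ Icc 1 n.sqrt, d ^ 2 ∈
      Icc (n.sqrt * n) (n.sqrt * n + n) := by
  have hterm : ∀ d ∈ Icc 1 n.sqrt, d * (n / d + 1 - d) + d ^ 2 = d * (n / d) + d := fun d hd =>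
    mul_div_add_one_sub_add_sq (mem_Icc.1 hd).1 (Nat.le_sqrt'.1 (mem_Icc.1 hd).2)
  rw [sum_smallDivSum_eq, ← sum_add_distrib, sum_congr rfl hterm, mem_Icc]
  constructor
  · simpa using card_nsmul_le_sum (Icc 1 n.sqrt) (fun d => d * (n / d) + d) n
      fun d hd => (Nat.lt_mul_div_succ n (mem_Icc.1 hd).1).le
  · calc ∑ d ∈ Icc 1 n.sqrt, (d * (n / d) + d) ≤ #(Icc 1 n.sqrt) • (n + n.sqrt) :=
          sum_le_card_nsmul _ _ _ fun d hd => add_le_add (Nat.mul_div_le n d) (mem_Icc.1 hd).2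
      _ ≤ n.sqrt * n + n := by
          simpa [mul_add] using Nat.sqrt_le n

theorem sum_Icc_sq (s : ℕ) : ∑ d ∈ Icc 1 s, (d : ℝ) ^ 2 = s * (s + 1) * (2 * s + 1) / 6 := by
  induction s with
  | zero => simp
  | succ s ih =>
    rw [sum_Icc_succ_top (by omega), ih]
    push_cast
    ring

theorem rpow_three_halves_eq_mul_sqrt {x : ℝ} (hx : 0 ≤ x) : x ^ ((3 : ℝ) / 2) = x * √x := by
  rw [show (3 : ℝ) / 2 = 1 + 1 / 2 by norm_num, Real.rpow_add' hx (by norm_num), Real.rpow_one,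
    Real.sqrt_eq_rpow]

theorem sqrt_natCast_le_self (n : ℕ) : √(n : ℝ) ≤ n :=
  Real.sqrt_le_self_iff.2 (by norm_cast; omega)

theorem abs_sum_smallDivSum_sub_le (n : ℕ) :
    |∑ k ∈ Icc 1 n, (smallDivSum k : ℝ) - 2 / 3 * (n : ℝ) ^ ((3 : ℝ) / 2)| ≤ 2 * n := by
  obtain ⟨hlo, hhi⟩ := mem_Icc.1 (sum_smallDivSum_add_sum_sq_mem_Icc n)
  have hlo' := (Nat.cast_le (α := ℝ)).2 hlo
  have hhi' := (Nat.cast_le (α := ℝ)).2 hhi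
  push_cast [sum_Icc_sq] at hlo' hhi'
  rw [rpow_three_halves_eq_mul_sqrt n.cast_nonneg, abs_le]
  set s : ℝ := (n.sqrt : ℝ)
  set t := √(n : ℝ)
  have hst : s ≤ t := Real.nat_sqrt_le_real_sqrt
  have hts : t < s + 1 := Real.real_sqrt_lt_nat_sqrt_succ
  have htt : t * t = n := Real.mul_self_sqrt n.cast_nonneg
  have htn : t ≤ n := sqrt_natCast_le_self n
  have hs0 : 0 ≤ s := n.sqrt.cast_nonneg
  have hpoly : s * n - s * (s + 1) * (2 * s + 1) / 6 - 2 / 3 * (n * t)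
      = -((t - s) ^ 2 * (2 * t + s) / 3 + s ^ 2 / 2 + s / 6) := by
    rw [← htt]; ring
  have herr : (t - s) ^ 2 * (2 * t + s) ≤ 3 * t := by
    have : (t - s) ^ 2 ≤ 1 := by nlinarith
    nlinarith
  have hss : s ^ 2 ≤ n := by nlinarith
  have herr0 : 0 ≤ (t - s) ^ 2 * (2 * t + s) := by positivity
  constructor <;> linarith [sq_nonneg s]

theorem integral_sqrt (b : ℝ) : ∫ x in (0 : ℝ)..b, √x = 2 / 3 * b ^ ((3 : ℝ) / 2) := by
  simp_rw [Real.sqrt_eq_rpow]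
  rw [integral_rpow (Or.inl (by norm_num))]
  norm_num
  ring

theorem sum_sqrt_mem_Icc (n : ℕ) :
    ∑ k ∈ Icc 1 n, √(k : ℝ) ∈ Set.Icc (2 / 3 * (n : ℝ) ^ ((3 : ℝ) / 2))
      (2 / 3 * (n : ℝ) ^ ((3 : ℝ) / 2) + √n) := by
  have hmono : MonotoneOn (fun x : ℝ => √x) (Set.Icc 0 (0 + n)) :=
    fun x _ y _ hxy => Real.sqrt_le_sqrt hxy
  have hlo := hmono.integral_le_sum
  have hhi := hmono.sum_le_integral
  have hshift := sum_range_succ' (fun i : ℕ => √(i : ℝ)) n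
  rw [sum_range_succ] at hshift
  simp only [zero_add, integral_sqrt] at hlo hhi
  simp only [Nat.cast_zero, Real.sqrt_zero, add_zero] at hshift
  have hIcc : ∑ i ∈ range n, √((i + 1 : ℕ) : ℝ) = ∑ k ∈ Icc 1 n, √(k : ℝ) := by
    rw [range_eq_Ico, sum_Ico_add' (fun k : ℕ => √(k : ℝ)), ← Ico_add_one_right_eq_Icc]
  rw [hIcc] at hlo hshift
  rw [Set.mem_Icc]
  constructor <;> linarith

theorem abs_sum_sqrt_sub_le (n : ℕ) :
    |∑ k ∈ Icc 1 n, √(k : ℝ) - 2 / 3 * (n : ℝ) ^ ((3 : ℝ) / 2)| ≤ n := by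
  obtain ⟨hlo, hhi⟩ := sum_sqrt_mem_Icc n
  rw [abs_le]
  constructor <;> linarith [sqrt_natCast_le_self n]

theorem natCast_isLittleO_rpow_three_halves :
    (fun n : ℕ => (n : ℝ)) =o[atTop] fun n => 2 / 3 * (n : ℝ) ^ ((3 : ℝ) / 2) := by
  have hsqrt : Tendsto (fun n : ℕ => ‖√(n : ℝ)‖) atTop atTop := by
    simp only [Real.norm_of_nonneg (Real.sqrt_nonneg _)]
    exact Real.tendsto_sqrt_atTop.comp tendsto_natCast_atTop_atTop
  have := (isBigO_refl (fun n : ℕ => (n : ℝ)) atTop).mul_isLittleO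
    ((isLittleO_one_left_iff ℝ).2 hsqrt)
  simp_rw [rpow_three_halves_eq_mul_sqrt (Nat.cast_nonneg _)]
  simpa using this.const_mul_right (by norm_num : (2 / 3 : ℝ) ≠ 0)

theorem isEquivalent_rpow_three_halves_of_abs_sub_le {f : ℕ → ℝ} (C : ℝ)
    (h : ∀ n : ℕ, |f n - 2 / 3 * (n : ℝ) ^ ((3 : ℝ) / 2)| ≤ C * n) :
    f ~[atTop] fun n => 2 / 3 * (n : ℝ) ^ ((3 : ℝ) / 2) :=
  (IsBigO.of_bound C (Eventually.of_forall fun n => by simpa using h n)).trans_isLittleO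
    natCast_isLittleO_rpow_three_halves

theorem smallDivSum_average_order_sqrt :
    Tendsto (fun n : ℕ =>
        (∑ k ∈ Finset.Icc 1 n, (smallDivSum k : ℝ)) / (∑ k ∈ Finset.Icc 1 n, Real.sqrt k))
      atTop (nhds 1) ∧
    Tendsto (fun n : ℕ =>
        (∑ k ∈ Finset.Icc 1 n, (smallDivSum k : ℝ)) / ((2 / 3) * (n : ℝ) ^ ((3 : ℝ) / 2)))
      atTop (nhds 1) := by
  have hpos : ∀ᶠ n : ℕ in atTop, 0 < 2 / 3 * (n : ℝ) ^ ((3 : ℝ) / 2) :=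
    (eventually_gt_atTop 0).mono fun n hn => by positivity
  have hS := isEquivalent_rpow_three_halves_of_abs_sub_le 2 abs_sum_smallDivSum_sub_le
  have hG := isEquivalent_rpow_three_halves_of_abs_sub_le 1 fun n =>
    (abs_sum_sqrt_sub_le n).trans_eq (one_mul _).symm
  exact ⟨(isEquivalent_iff_tendsto_one ((hG.eventually_pos hpos).mono fun _ h => h.ne')).1
    (hS.trans hG.symm), (isEquivalent_iff_tendsto_one (hpos.mono fun _ h => h.ne')).1 hS⟩
end

section
/- The limit superior of the sequence a(n)/√n as n → ∞ equals +∞; that is, the sequence a(n)/√n is unbounded above. -/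
/-!
Every divisor of `m` is a small divisor of `m ^ 2`, so `a(m²)/√(m²) ≥ σ(m)/m = ∑_{d ∣ m} 1/d`.
For `m = k!` every `d ≤ k` divides `m`, so this is at least the harmonic number `H_k`, which
diverges.
-/

open Filter

theorem Nat.sum_inv_divisors_eq_sum_divisors_div (n : ℕ) :
    ∑ d ∈ n.divisors, (d : ℝ)⁻¹ = (∑ d ∈ n.divisors, d : ℕ) / n := by
  rw [← Nat.sum_div_divisors, Nat.cast_sum, Finset.sum_div]
  refine Finset.sum_congr rfl fun d hd => ?_
  have hn : (n : ℝ) ≠ 0 := by exact_mod_cast Nat.ne_zero_of_mem_divisors hd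
  have hd0 : (d : ℝ) ≠ 0 := by exact_mod_cast (Nat.pos_of_mem_divisors hd).ne'
  rw [Nat.cast_div (Nat.dvd_of_mem_divisors hd) hd0]
  field_simp

theorem sum_divisors_le_smallDivSum_sq (m : ℕ) :
    ∑ d ∈ m.divisors, d ≤ smallDivSum (m ^ 2) := by
  refine Finset.sum_le_sum_of_subset fun d hd => ?_
  rw [Finset.mem_filter, Nat.mem_divisors]
  exact ⟨⟨(Nat.dvd_of_mem_divisors hd).trans (dvd_pow_self m two_ne_zero),
      pow_ne_zero 2 (Nat.ne_zero_of_mem_divisors hd)⟩,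
    Nat.pow_le_pow_left (Nat.divisor_le hd) 2⟩

theorem sum_inv_divisors_le_smallDivSum_sq_div_sqrt (m : ℕ) :
    ∑ d ∈ m.divisors, (d : ℝ)⁻¹ ≤ smallDivSum (m ^ 2) / Real.sqrt (m ^ 2 : ℕ) := by
  rw [Nat.sum_inv_divisors_eq_sum_divisors_div, Nat.cast_pow, Real.sqrt_sq m.cast_nonneg]
  gcongr
  exact_mod_cast sum_divisors_le_smallDivSum_sq m

theorem sum_range_one_div_succ_le_sum_inv_divisors_factorial (k : ℕ) :
    ∑ i ∈ Finset.range k, (1 / (i + 1) : ℝ) ≤ ∑ d ∈ k.factorial.divisors, (d : ℝ)⁻¹ := by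
  simp only [one_div, ← Nat.cast_add_one]
  rw [Finset.range_eq_Ico, Finset.sum_Ico_add' (fun i : ℕ => (i : ℝ)⁻¹) 0 k (c := 1), zero_add]
  refine Finset.sum_le_sum_of_subset_of_nonneg (fun i hi => ?_) fun _ _ _ => by positivity
  rw [Finset.mem_Ico] at hi
  exact Nat.mem_divisors.2 ⟨Nat.dvd_factorial hi.1 (Nat.lt_succ_iff.1 hi.2), Nat.factorial_ne_zero k⟩

theorem tendsto_sum_inv_divisors_factorial_atTop :
    Tendsto (fun k : ℕ => ∑ d ∈ k.factorial.divisors, (d : ℝ)⁻¹) atTop atTop :=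
  tendsto_atTop_mono sum_range_one_div_succ_le_sum_inv_divisors_factorial
    Real.tendsto_sum_range_one_div_nat_succ_atTop

theorem frequently_le_smallDivSum_div_sqrt (M : ℝ) :
    ∃ᶠ n in atTop, M ≤ (smallDivSum n : ℝ) / Real.sqrt n := by
  have hsq : Tendsto (fun k : ℕ => k.factorial ^ 2) atTop atTop :=
    tendsto_atTop_mono (fun k => (Nat.self_le_factorial k).trans (Nat.le_self_pow two_ne_zero _))
      tendsto_id
  exact hsq.frequently_map _ (fun k hk => hk.trans (sum_inv_divisors_le_smallDivSum_sq_div_sqrt _))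
    (tendsto_sum_inv_divisors_factorial_atTop.eventually_ge_atTop M).frequently

theorem smallDivSum_limsup_eq_top :
    limsup (fun n : ℕ => ((smallDivSum n : ℝ) / Real.sqrt n : EReal)) atTop = ⊤ ∧
    ¬ BddAbove (Set.range fun n : ℕ => (smallDivSum n : ℝ) / Real.sqrt n) := by
  constructor
  · refine (EReal.eq_top_iff_forall_lt _).2 fun M =>
      (EReal.coe_lt_coe_iff.2 (lt_add_one M)).trans_le (le_limsup_of_frequently_le' ?_)
    exact (frequently_le_smallDivSum_div_sqrt (M + 1)).mono fun n hn => by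
      rw [← EReal.coe_div]; exact_mod_cast hn
  · rintro ⟨B, hB⟩
    obtain ⟨n, hn⟩ := (frequently_le_smallDivSum_div_sqrt (B + 1)).exists
    linarith [hB ⟨n, rfl⟩]
end

section
/- Let p_1 < p_2 < ⋯ < p_n be the first n primes and let s_n = p_1²·p_2²⋯p_n². Then a(s_n) ≥ ∏_{k=1}^{n} (p_k + 1); consequently a(s_n)/√(s_n) ≥ ∏_{k=1}^{n} (1 + 1/p_k). -/
open ArithmeticFunction
open scoped ArithmeticFunction.sigma Function

theorem divisors_subset_smallDivisors_sq (m : ℕ) :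
    m.divisors ⊆ (m ^ 2).divisors.filter (fun d => d ^ 2 ≤ m ^ 2) := by
  intro d hd
  obtain ⟨hdm, hm⟩ := Nat.mem_divisors.mp hd
  refine Finset.mem_filter.mpr ⟨Nat.mem_divisors.mpr ⟨hdm.trans (dvd_pow_self m two_ne_zero),
    pow_ne_zero 2 hm⟩, ?_⟩
  exact Nat.pow_le_pow_left (Nat.divisor_le hd) 2

theorem sigma_one_le_smallDivSum_sq (m : ℕ) : σ 1 m ≤ smallDivSum (m ^ 2) := by
  rw [sigma_one_apply, smallDivSum]
  exact Finset.sum_le_sum_of_subset (divisors_subset_smallDivisors_sq m)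

theorem sigma_one_apply_prime {p : ℕ} (hp : p.Prime) : σ 1 p = p + 1 := by
  simpa [Finset.sum_range_succ, add_comm] using sigma_one_apply_prime_pow (i := 1) hp

theorem sigma_one_prod_primes {ι : Type*} (t : Finset ι) (p : ι → ℕ)
    (hp : ∀ i ∈ t, (p i).Prime) (hinj : Set.InjOn p t) :
    σ 1 (∏ i ∈ t, p i) = ∏ i ∈ t, (p i + 1) := by
  have hcop : (t : Set ι).Pairwise (Nat.Coprime on p) := fun i hi j hj hij =>
    (Nat.coprime_primes (hp i hi) (hp j hj)).mpr fun he => hij (hinj hi hj he)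
  rw [isMultiplicative_sigma.map_prod p t hcop]
  exact Finset.prod_congr rfl fun i hi => sigma_one_apply_prime (hp i hi)

theorem prod_one_add_inv_mul_prod {ι K : Type*} [Field K] (t : Finset ι) (x : ι → K)
    (hx : ∀ i ∈ t, x i ≠ 0) :
    (∏ i ∈ t, (1 + 1 / x i)) * ∏ i ∈ t, x i = ∏ i ∈ t, (x i + 1) := by
  rw [← Finset.prod_mul_distrib]
  refine Finset.prod_congr rfl fun i hi => ?_
  field_simp [hx i hi]

theorem smallDivSum_product_of_prime_squares (n : ℕ)
    (s : ℕ) (hs : s = ∏ k ∈ Finset.range n, (Nat.nth Nat.Prime k) ^ 2) :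
    (∏ k ∈ Finset.range n, (Nat.nth Nat.Prime k + 1)) ≤ smallDivSum s ∧
    (∏ k ∈ Finset.range n, (1 + 1 / (Nat.nth Nat.Prime k : ℝ)))
      ≤ (smallDivSum s : ℝ) / Real.sqrt s := by
  set P := ∏ k ∈ Finset.range n, Nat.nth Nat.Prime k
  have hprime (k : ℕ) : (Nat.nth Nat.Prime k).Prime := Nat.prime_nth_prime k
  have hsP : s = P ^ 2 := by rw [hs, Finset.prod_pow]
  have hσ : σ 1 P = ∏ k ∈ Finset.range n, (Nat.nth Nat.Prime k + 1) :=
    sigma_one_prod_primes _ _ (fun k _ => hprime k)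
      (Nat.nth_injective Nat.infinite_setOfPred_prime).injOn
  have hbound : ∏ k ∈ Finset.range n, (Nat.nth Nat.Prime k + 1) ≤ smallDivSum s :=
    hσ ▸ hsP ▸ sigma_one_le_smallDivSum_sq P
  refine ⟨hbound, ?_⟩
  have hPpos : (0 : ℝ) < P := by
    exact_mod_cast Finset.prod_pos fun k _ => (hprime k).pos
  have hsqrt : Real.sqrt s = P := by
    rw [hsP, Nat.cast_pow, Real.sqrt_sq hPpos.le]
  rw [hsqrt, le_div_iff₀ hPpos, Nat.cast_prod,
    prod_one_add_inv_mul_prod _ _ fun k _ => Nat.cast_ne_zero.mpr (hprime k).ne_zero]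
  exact_mod_cast hbound
end

section
/- For every real σ > 3/2, the series ∑_{n=1}^{∞} a(n)/n^{σ} converges. Together with the divergence at σ = 3/2, this means the abscissa of convergence of the Dirichlet series ∑ a(n)/n^s is 3/2. -/
/-!
Every small divisor of `n` is at most `√n`, so `a(n) ≤ τ(n) √n`, and `τ(n) √n` is the Dirichlet
convolution of `n ↦ √n` with itself, because `√d · √(n/d) = √n` for every `d ∣ n`. The L-series
of `n ↦ √n` converges absolutely for `Re s > 3/2`, hence so does that of its convolution square.
-/

open Finset LSeries.notation

lemma smallDivSum_le_card_divisors_mul_sqrt (n : ℕ) :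
    (smallDivSum n : ℝ) ≤ #n.divisors * √n :=
  calc (smallDivSum n : ℝ) = ∑ d ∈ n.divisors.filter (fun d => d ^ 2 ≤ n), (d : ℝ) := by
        simp [smallDivSum]
    _ ≤ ∑ _d ∈ n.divisors.filter (fun d => d ^ 2 ≤ n), √n :=
        sum_le_sum fun d hd => Real.le_sqrt_of_sq_le (by exact_mod_cast (mem_filter.1 hd).2)
    _ ≤ ∑ _d ∈ n.divisors, √n :=
        sum_le_sum_of_subset_of_nonneg (filter_subset _ _) fun _ _ _ => Real.sqrt_nonneg _
    _ = #n.divisors * √n := by rw [sum_const, nsmul_eq_mul]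

lemma sqrt_convolution_sqrt (n : ℕ) :
    ((fun k : ℕ => (√k : ℂ)) ⍟ fun k : ℕ => (√k : ℂ)) n = (#n.divisors * √n : ℝ) := by
  simp only [LSeries.convolution_def, Nat.sum_divisorsAntidiagonal fun x y => (√x : ℂ) * √y]
  have h (d : ℕ) (hd : d ∈ n.divisors) : (√d : ℂ) * √(n / d : ℕ) = √n := by
    rw [← Complex.ofReal_mul, ← Real.sqrt_mul (Nat.cast_nonneg _), ← Nat.cast_mul,
      Nat.mul_div_cancel' (Nat.dvd_of_mem_divisors hd)]
  rw [sum_congr rfl h, sum_const, nsmul_eq_mul, Complex.ofReal_mul, Complex.ofReal_natCast]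

lemma LSeriesSummable_sqrt {s : ℂ} (hs : 3 / 2 < s.re) :
    LSeriesSummable (fun n : ℕ => (√n : ℂ)) s :=
  LSeriesSummable_of_le_const_mul_rpow hs ⟨1, fun n _ => by
    rw [Complex.norm_real, Real.norm_of_nonneg (Real.sqrt_nonneg _), Real.sqrt_eq_rpow]
    norm_num⟩

theorem smallDivSum_dirichlet_summable (σ : ℝ) (hσ : 3 / 2 < σ) :
    Summable (fun n : ℕ => (smallDivSum n : ℝ) / (n : ℝ) ^ σ) := by
  have hs : 3 / 2 < (σ : ℂ).re := hσ
  have hconv := (LSeriesSummable_sqrt hs).convolution (LSeriesSummable_sqrt hs)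
  refine hconv.norm.of_nonneg_of_le (fun n => by positivity) fun n => ?_
  rw [LSeries.norm_term_eq, sqrt_convolution_sqrt, Complex.norm_real, Complex.ofReal_re,
    Real.norm_of_nonneg (by positivity)]
  split_ifs with hn
  · simp [hn, smallDivSum]
  · gcongr
    exact smallDivSum_le_card_divisors_mul_sqrt n
end

section
/- For every natural number n ≥ 2, ∑_{k=1}^{n} a(k)/k^{3/2} ≥ 2·log⌊√n⌋ − 2·ζ(3/2), where ζ denotes the Riemann zeta function and ⌊·⌋ the integer part. -/
/-!
Writing each `k ≤ n` with small divisor `d` as `k = d * m` with `d ≤ m ≤ n / d`, the sum becomes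
`∑_{d ≤ √n} d^{-1/2} ∑_{d ≤ m ≤ n/d} m^{-3/2}`. Since `2/√m - 2/√(m+1) ≤ m^{-3/2}`, the inner sum
telescopes to at least `2/√d - 2/√(n/d + 1)`, so the whole sum is at least
`∑_{d ≤ √n} (2/d - 2/√n) ≥ 2 log ⌊√n⌋ - 2`, and `ζ(3/2) ≥ 1`.
-/

open Finset Real

theorem Nat.sum_Icc_sum_smallDivisors_eq {M : Type*} [AddCommMonoid M] (n : ℕ) (f : ℕ → ℕ → M) :
    ∑ k ∈ Icc 1 n, ∑ d ∈ k.divisors.filter (· ^ 2 ≤ k), f d k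
      = ∑ d ∈ Icc 1 n.sqrt, ∑ m ∈ Icc d (n / d), f d (d * m) := by
  rw [sum_comm' (t' := Icc 1 n.sqrt) (s' := fun d => (Icc d (n / d)).image (d * ·))]
  · refine sum_congr rfl fun d hd => sum_image fun m _ m' _ h => ?_
    exact Nat.eq_of_mul_eq_mul_left (mem_Icc.1 hd).1 h
  · intro k d
    simp only [mem_Icc, mem_filter, Nat.mem_divisors, mem_image, Nat.le_sqrt, ← sq]
    constructor
    · rintro ⟨⟨hk1, hkn⟩, ⟨⟨m, rfl⟩, -⟩, hd2⟩
      have hd : 0 < d := Nat.pos_of_ne_zero (by rintro rfl; simp at hk1)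
      refine ⟨⟨m, ⟨?_, ?_⟩, rfl⟩, hd, ?_⟩
      · nlinarith
      · exact (Nat.le_div_iff_mul_le hd).2 (by linarith)
      · linarith
    · rintro ⟨⟨m, ⟨hdm, hmn⟩, rfl⟩, hd, hdn⟩
      have hdmn : d * m ≤ n := (Nat.mul_le_mul_left d hmn).trans (Nat.mul_div_le n d)
      have hdm0 : d * m ≠ 0 := Nat.mul_ne_zero (by omega) (by omega)
      exact ⟨⟨Nat.one_le_iff_ne_zero.2 hdm0, hdmn⟩, ⟨dvd_mul_right d m, hdm0⟩, by nlinarith⟩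

theorem Real.rpow_three_halves {x : ℝ} (hx : 0 ≤ x) : x ^ (3 / 2 : ℝ) = x * √x := by
  rw [sqrt_eq_rpow, ← rpow_one_add' hx (by norm_num)]
  norm_num

theorem two_div_sqrt_sub_two_div_sqrt_add_one_le {y : ℝ} (hy : 0 < y) :
    2 / √y - 2 / √(y + 1) ≤ 1 / (y * √y) := by
  have ha : 0 < √y := sqrt_pos.2 hy
  have hab : √y ≤ √(y + 1) := sqrt_le_sqrt (by linarith)
  have ha2 : √y ^ 2 = y := sq_sqrt hy.le
  have hb2 : √(y + 1) ^ 2 = y + 1 := sq_sqrt (by linarith)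
  rw [div_sub_div _ _ ha.ne' (ha.trans_le hab).ne', div_le_div_iff₀ (by positivity) (by positivity)]
  nlinarith [mul_le_mul_of_nonneg_left hab ha.le, sq_nonneg (√(y + 1) - √y)]

theorem sub_two_div_sqrt_le_sum_Ico {a : ℕ} (ha : 0 < a) {M : ℕ} (haM : a ≤ M) :
    2 / √a - 2 / √M ≤ ∑ m ∈ Ico a M, 1 / (m * √m) := by
  induction M, haM using Nat.le_induction with
  | base => simp
  | succ M haM ih =>
    rw [sum_Ico_succ_top haM]
    have := two_div_sqrt_sub_two_div_sqrt_add_one_le (y := M) (by exact_mod_cast ha.trans_le haM)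
    push_cast
    linarith

theorem sub_two_div_sqrt_le_sum_div_mul_rpow {d n : ℕ} (hd : 0 < d) (hdn : d * d ≤ n) :
    2 / d - 2 / √n ≤ ∑ m ∈ Icc d (n / d), (d : ℝ) / ((d * m : ℕ) : ℝ) ^ (3 / 2 : ℝ) := by
  have hd' : (0 : ℝ) < d := Nat.cast_pos.2 hd
  have hn : (n : ℝ) ≤ d * ((n / d + 1 : ℕ) : ℝ) := by
    have := (Nat.lt_div_mul_add (a := n) hd).le
    rw [← Nat.cast_mul, Nat.cast_le]
    linarith
  have hterm : ∀ m ∈ Icc d (n / d),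
      (d : ℝ) / ((d * m : ℕ) : ℝ) ^ (3 / 2 : ℝ) = 1 / √d * (1 / (m * √m)) := by
    intro m hm
    have hm' : (0 : ℝ) < m := by exact_mod_cast hd.trans_le (mem_Icc.1 hm).1
    rw [Nat.cast_mul, rpow_three_halves (by positivity), sqrt_mul hd'.le]
    field_simp
  calc 2 / d - 2 / √n
      ≤ 2 / d - 2 / √(d * ((n / d + 1 : ℕ) : ℝ)) := by
        gcongr
        exact sqrt_pos.2 (by exact_mod_cast (Nat.mul_pos hd hd).trans_le hdn)
    _ = 1 / √d * (2 / √d - 2 / √((n / d + 1 : ℕ) : ℝ)) := by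
        rw [sqrt_mul hd'.le]
        field_simp
        linear_combination √((n / d + 1 : ℕ) : ℝ) * sq_sqrt hd'.le
    _ ≤ 1 / √d * ∑ m ∈ Ico d (n / d + 1), 1 / (m * √m) := by
        gcongr
        exact sub_two_div_sqrt_le_sum_Ico hd
          (((Nat.le_div_iff_mul_le hd).2 hdn).trans (Nat.le_succ _))
    _ = _ := by
        rw [mul_sum, Ico_add_one_right_eq_Icc]
        exact (sum_congr rfl hterm).symm

theorem one_le_riemannZeta_re {s : ℝ} (hs : 1 < s) : 1 ≤ (riemannZeta s).re := by
  have hsum : Summable fun n : ℕ => 1 / (n : ℝ) ^ s := summable_one_div_nat_rpow.2 hs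
  have hzeta : riemannZeta s = ↑(∑' n : ℕ, 1 / (n : ℝ) ^ s) := by
    rw [zeta_eq_tsum_one_div_nat_cpow (by simpa using hs), Complex.ofReal_tsum]
    push_cast [Complex.ofReal_cpow (Nat.cast_nonneg _)]
    rfl
  rw [hzeta, Complex.ofReal_re]
  simpa using hsum.le_tsum 1 fun n _ => by positivity

theorem smallDivSum_partial_dirichlet_lower_bound_general (n : ℕ) :
    2 * Real.log (Nat.sqrt n) - 2 * (riemannZeta ((3 : ℂ) / 2)).re
      ≤ ∑ k ∈ Finset.Icc 1 n, (smallDivSum k : ℝ) / (k : ℝ) ^ ((3 : ℝ) / 2) := by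
  set s := n.sqrt
  have hzeta : 1 ≤ (riemannZeta ((3 : ℂ) / 2)).re := by
    simpa using one_le_riemannZeta_re (s := 3 / 2) (by norm_num)
  have hlog : 2 * log s ≤ ∑ d ∈ Icc 1 s, 2 / (d : ℝ) := by
    have := log_le_harmonic_floor s s.cast_nonneg
    simp only [Nat.floor_natCast, harmonic_eq_sum_Icc, Rat.cast_sum, Rat.cast_inv,
      Rat.cast_natCast] at this
    simpa [div_eq_mul_inv, ← mul_sum] using this
  have hs : (s : ℝ) * (2 / √n) ≤ 2 := by
    rw [mul_div_left_comm]
    exact mul_le_of_le_one_right zero_le_two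
      (div_le_one_of_le₀ nat_sqrt_le_real_sqrt (sqrt_nonneg _))
  have hreindex : ∑ k ∈ Icc 1 n, (smallDivSum k : ℝ) / (k : ℝ) ^ (3 / 2 : ℝ)
      = ∑ d ∈ Icc 1 s, ∑ m ∈ Icc d (n / d), (d : ℝ) / ((d * m : ℕ) : ℝ) ^ (3 / 2 : ℝ) := by
    simp only [smallDivSum, Nat.cast_sum, sum_div]
    exact Nat.sum_Icc_sum_smallDivisors_eq n _
  rw [hreindex]
  calc 2 * log s - 2 * (riemannZeta ((3 : ℂ) / 2)).re
      ≤ ∑ d ∈ Icc 1 s, (2 / (d : ℝ) - 2 / √n) := by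
        rw [sum_sub_distrib, sum_const, Nat.card_Icc, Nat.add_sub_cancel, nsmul_eq_mul]
        linarith
    _ ≤ _ := sum_le_sum fun d hd =>
        sub_two_div_sqrt_le_sum_div_mul_rpow (mem_Icc.1 hd).1 (Nat.le_sqrt.1 (mem_Icc.1 hd).2)

theorem smallDivSum_partial_dirichlet_lower_bound (n : ℕ) (hn : 2 ≤ n) :
    2 * Real.log (Nat.sqrt n) - 2 * (riemannZeta ((3 : ℂ) / 2)).re
      ≤ ∑ k ∈ Finset.Icc 1 n, (smallDivSum k : ℝ) / (k : ℝ) ^ ((3 : ℝ) / 2) :=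
  smallDivSum_partial_dirichlet_lower_bound_general n
end

section
/- For every real σ with 3/2 < σ < 2 and every natural number n ≥ 1, ∑_{k=1}^{n} a(k)/k^{σ} ≤ (ζ(2(σ−1)) + 1)/(2 − σ), where ζ denotes the Riemann zeta function; in particular the partial sums of ∑ a(k)/k^σ are bounded for such σ. -/
open Finset Real

lemma sum_Icc_rpow_neg_le {s : ℝ} (hs : 1 < s) {d : ℕ} (hd : 0 < d) (n : ℕ) :
    ∑ m ∈ Icc d n, (m : ℝ) ^ (-s) ≤ (d : ℝ) ^ (-s) + (d : ℝ) ^ (1 - s) / (s - 1) := by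
  rcases lt_or_ge n d with hnd | hdn
  · rw [Icc_eq_empty_of_lt hnd, sum_empty]; positivity
  have hd₀ : (0 : ℝ) < d := by exact_mod_cast hd
  have hdn' : (d : ℝ) ≤ n := by exact_mod_cast hdn
  have anti : AntitoneOn (fun x : ℝ => x ^ (-s)) (Set.Icc (d : ℝ) n) := fun x hx y _ hxy =>
    rpow_le_rpow_of_nonpos (hd₀.trans_le hx.1) hxy (by linarith)
  have tail : ∑ m ∈ Ioc d n, (m : ℝ) ^ (-s) ≤ ∫ x in (d : ℝ)..n, x ^ (-s) := by
    simpa [← Ico_add_one_add_one_eq_Ioc, ← sum_Ico_add'] using anti.sum_le_integral_Ico hdn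
  have integral : ∫ x in (d : ℝ)..n, x ^ (-s) ≤ (d : ℝ) ^ (1 - s) / (s - 1) := by
    rw [integral_rpow (Or.inr ⟨by linarith, fun h => ?_⟩)]
    · rw [neg_add_eq_sub, ← neg_div_neg_eq, neg_sub, neg_sub]
      gcongr
      exact sub_le_self _ (by positivity)
    · rw [Set.uIcc_of_le hdn'] at h
      linarith [h.1]
  rw [Icc_eq_cons_Ioc hdn, sum_cons]
  linarith

lemma sum_filter_dvd_div_rpow_le (σ : ℝ) {d : ℕ} (hd : 0 < d) (n : ℕ) :
    ∑ k ∈ (Icc 1 n).filter (fun k => d ∣ k ∧ d ^ 2 ≤ k), (d : ℝ) / (k : ℝ) ^ σ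
      ≤ ∑ m ∈ Icc d n, (d : ℝ) / ((d : ℝ) * m) ^ σ := by
  have hsub : (Icc 1 n).filter (fun k => d ∣ k ∧ d ^ 2 ≤ k) ⊆ (Icc d n).image (d * ·) := by
    intro k hk
    simp only [mem_filter, mem_Icc] at hk
    obtain ⟨⟨hk₁, hkn⟩, ⟨m, rfl⟩, hdm⟩ := hk
    exact mem_image.2 ⟨m, mem_Icc.2 ⟨by nlinarith, by nlinarith⟩, rfl⟩
  calc _ ≤ ∑ k ∈ (Icc d n).image (d * ·), (d : ℝ) / (k : ℝ) ^ σ :=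
        sum_le_sum_of_subset_of_nonneg hsub fun _ _ _ => by positivity
    _ = _ := by
        rw [sum_image fun _ _ _ _ h => Nat.eq_of_mul_eq_mul_left hd h]
        push_cast; rfl

lemma sum_smallDivSum_div_rpow_le (σ : ℝ) (n : ℕ) :
    ∑ k ∈ Icc 1 n, (smallDivSum k : ℝ) / (k : ℝ) ^ σ
      ≤ ∑ d ∈ Icc 1 n, ∑ m ∈ Icc d n, (d : ℝ) / ((d : ℝ) * m) ^ σ := by
  calc _ = ∑ k ∈ Icc 1 n, ∑ d ∈ k.divisors.filter (fun d => d ^ 2 ≤ k),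
        (d : ℝ) / (k : ℝ) ^ σ := by
        simp only [smallDivSum, Nat.cast_sum, sum_div]
    _ = ∑ d ∈ Icc 1 n, ∑ k ∈ (Icc 1 n).filter (fun k => d ∣ k ∧ d ^ 2 ≤ k),
        (d : ℝ) / (k : ℝ) ^ σ := by
        refine sum_comm' fun k d => ?_
        simp only [mem_Icc, mem_filter, Nat.mem_divisors]
        constructor
        · rintro ⟨⟨hk₁, hkn⟩, ⟨hdk, -⟩, hd2⟩
          have := Nat.le_of_dvd hk₁ hdk
          have := Nat.pos_of_dvd_of_pos hdk hk₁
          exact ⟨⟨⟨hk₁, hkn⟩, hdk, hd2⟩, by omega, by omega⟩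
        · rintro ⟨⟨⟨hk₁, hkn⟩, hdk, hd2⟩, -⟩
          exact ⟨⟨hk₁, hkn⟩, ⟨hdk, by omega⟩, hd2⟩
    _ ≤ _ := sum_le_sum fun d hd => sum_filter_dvd_div_rpow_le σ (mem_Icc.1 hd).1 n

lemma sum_Icc_div_mul_rpow_le {σ : ℝ} (hσ : 1 < σ) {d : ℕ} (hd : 0 < d) (n : ℕ) :
    ∑ m ∈ Icc d n, (d : ℝ) / ((d : ℝ) * m) ^ σ
      ≤ (d : ℝ) ^ (-(2 * σ - 1)) + (d : ℝ) ^ (-(2 * (σ - 1))) / (σ - 1) := by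
  have hd₀ : (0 : ℝ) < d := by exact_mod_cast hd
  have hterm : ∀ m ∈ Icc d n,
      (d : ℝ) / ((d : ℝ) * m) ^ σ = (d : ℝ) ^ (1 - σ) * (m : ℝ) ^ (-σ) := by
    intro m hm
    have hm₀ : (0 : ℝ) < m := hd₀.trans_le (by exact_mod_cast (mem_Icc.1 hm).1)
    rw [mul_rpow hd₀.le hm₀.le, rpow_neg hm₀.le, rpow_sub hd₀, rpow_one]
    field_simp
  rw [sum_congr rfl hterm, ← mul_sum]
  calc _ ≤ (d : ℝ) ^ (1 - σ) * ((d : ℝ) ^ (-σ) + (d : ℝ) ^ (1 - σ) / (σ - 1)) := by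
        gcongr
        exact sum_Icc_rpow_neg_le hσ hd n
    _ = _ := by
        rw [mul_add, mul_div_assoc', ← rpow_add hd₀, ← rpow_add hd₀]
        ring_nf

lemma sum_Icc_rpow_neg_le_riemannZeta {s : ℝ} (hs : 1 < s) (n : ℕ) :
    ∑ d ∈ Icc 1 n, (d : ℝ) ^ (-s) ≤ (riemannZeta s).re := by
  have hζ : riemannZeta s = ((∑' m : ℕ, 1 / (m : ℝ) ^ s : ℝ) : ℂ) := by
    rw [zeta_eq_tsum_one_div_nat_cpow (by simpa using hs), Complex.ofReal_tsum]
    congr 1 with m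
    rw [Complex.ofReal_div, Complex.ofReal_one, Complex.ofReal_cpow m.cast_nonneg,
      Complex.ofReal_natCast]
  rw [hζ, Complex.ofReal_re]
  simp_rw [rpow_neg (Nat.cast_nonneg _), ← one_div]
  exact (Real.summable_one_div_nat_rpow.2 hs).sum_le_tsum _ fun m _ => by positivity

lemma one_add_one_div_le_one_div_two_sub {σ : ℝ} (hσ₁ : 3 / 2 ≤ σ) (hσ₂ : σ < 2) :
    1 + 1 / (2 * σ - 2) ≤ 1 / (2 - σ) := by
  rw [one_add_div (by linarith), div_le_div_iff₀ (by linarith) (by linarith)]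
  nlinarith

theorem smallDivSum_partial_dirichlet_upper_bound_general (σ : ℝ) (hσ₁ : 3 / 2 < σ) (hσ₂ : σ < 2)
    (n : ℕ) :
    ∑ k ∈ Finset.Icc 1 n, (smallDivSum k : ℝ) / (k : ℝ) ^ σ
      ≤ ((riemannZeta ((2 * (σ - 1) : ℝ) : ℂ)).re + 1) / (2 - σ) := by
  set Z := (riemannZeta ((2 * (σ - 1) : ℝ) : ℂ)).re
  have hA : ∑ d ∈ Icc 1 n, (d : ℝ) ^ (-(2 * σ - 1)) ≤ 1 + 1 / (2 * σ - 2) := by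
    simpa only [Nat.cast_one, one_rpow, sub_sub, one_add_one_eq_two] using
      sum_Icc_rpow_neg_le (s := 2 * σ - 1) (by linarith) one_pos n
  have hB : ∑ d ∈ Icc 1 n, (d : ℝ) ^ (-(2 * (σ - 1))) ≤ Z :=
    sum_Icc_rpow_neg_le_riemannZeta (by linarith) n
  have hZ : 0 ≤ Z := (sum_nonneg fun d _ => by positivity).trans hB
  calc _ ≤ ∑ d ∈ Icc 1 n, ((d : ℝ) ^ (-(2 * σ - 1)) + (d : ℝ) ^ (-(2 * (σ - 1))) / (σ - 1)) :=
        (sum_smallDivSum_div_rpow_le σ n).trans <| sum_le_sum fun d hd =>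
          sum_Icc_div_mul_rpow_le (by linarith) (mem_Icc.1 hd).1 n
    _ ≤ 1 + 1 / (2 * σ - 2) + Z / (σ - 1) := by
        rw [sum_add_distrib, ← sum_div]
        gcongr
        linarith
    _ ≤ 1 / (2 - σ) + Z / (2 - σ) := by
        gcongr ?_ + ?_
        · exact one_add_one_div_le_one_div_two_sub hσ₁.le hσ₂
        · exact div_le_div_of_nonneg_left hZ (by linarith) (by linarith)
    _ = (Z + 1) / (2 - σ) := by ring

theorem smallDivSum_partial_dirichlet_upper_bound (σ : ℝ) (hσ₁ : 3 / 2 < σ) (hσ₂ : σ < 2)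
    (n : ℕ) (hn : 1 ≤ n) :
    ∑ k ∈ Finset.Icc 1 n, (smallDivSum k : ℝ) / (k : ℝ) ^ σ
      ≤ ((riemannZeta ((2 * (σ - 1) : ℝ) : ℂ)).re + 1) / (2 - σ) :=
  smallDivSum_partial_dirichlet_upper_bound_general σ hσ₁ hσ₂ n
end

section
/- For every real σ > 2, the series ∑_{n=1}^{∞} a(n)/n^{σ} converges and satisfies ζ(2σ−1)·ζ(σ) ≤ ∑_{n=1}^{∞} a(n)/n^{σ} ≤ ζ(σ−1), where ζ denotes the Riemann zeta function. -/
/-!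
A number `n` has at most `√n` small divisors, each at most `√n`, so `a(n) ≤ n` and the series is
dominated termwise by `ζ(σ - 1)`. Conversely, every pair of positive integers `(d, m)` yields the
number `n = d²m` with the small divisor `d`, distinct pairs giving distinct (`n`, `d`); the
contribution `d / (d²m)^σ = d^(1 - 2σ) m^(-σ)` of these pairs sums to `ζ(2σ - 1) ζ(σ)`.
-/

open Finset

lemma smallDivSum_eq_sum_smallDivisors (n : ℕ) : smallDivSum n = ∑ d ∈ smallDivisors n, d := rfl

lemma mem_smallDivisors {n d : ℕ} : d ∈ smallDivisors n ↔ d ∣ n ∧ n ≠ 0 ∧ d ^ 2 ≤ n := by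
  simp [smallDivisors, and_assoc]

lemma smallDivisors_subset_Icc_sqrt (n : ℕ) : smallDivisors n ⊆ Icc 1 n.sqrt := by
  intro d hd
  obtain ⟨hdn, hn, hsq⟩ := mem_smallDivisors.1 hd
  exact mem_Icc.2 ⟨Nat.pos_of_dvd_of_pos hdn (Nat.pos_of_ne_zero hn),
    Nat.le_sqrt.2 (by nlinarith)⟩

lemma smallDivSum_le_self (n : ℕ) : smallDivSum n ≤ n :=
  calc smallDivSum n ≤ (smallDivisors n).card * n.sqrt := by
        rw [smallDivSum_eq_sum_smallDivisors, ← smul_eq_mul]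
        exact sum_le_card_nsmul _ _ _ fun d hd =>
          (mem_Icc.1 (smallDivisors_subset_Icc_sqrt n hd)).2
    _ ≤ n.sqrt * n.sqrt := by
        gcongr
        simpa using card_le_card (smallDivisors_subset_Icc_sqrt n)
    _ ≤ n := Nat.sqrt_le n

lemma smallDivSum_div_rpow_le (σ : ℝ) (n : ℕ) :
    (smallDivSum n : ℝ) / (n : ℝ) ^ σ ≤ 1 / (n : ℝ) ^ (σ - 1) := by
  rcases n.eq_zero_or_pos with rfl | hn
  · simpa [smallDivSum] using Real.rpow_nonneg le_rfl (σ - 1)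
  have hn' : (0 : ℝ) < n := by exact_mod_cast hn
  calc (smallDivSum n : ℝ) / (n : ℝ) ^ σ ≤ n / (n : ℝ) ^ σ := by
        gcongr; exact_mod_cast smallDivSum_le_self n
    _ = 1 / (n : ℝ) ^ (σ - 1) := by
        rw [Real.rpow_sub hn', Real.rpow_one]; field_simp

lemma summable_smallDivSum_div_rpow {σ : ℝ} (hσ : 2 < σ) :
    Summable fun n : ℕ => (smallDivSum n : ℝ) / (n : ℝ) ^ σ :=
  (Real.summable_one_div_nat_rpow.2 (by linarith)).of_nonneg_of_le (fun _ => by positivity)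
    (smallDivSum_div_rpow_le σ)

lemma hasSum_one_div_nat_rpow_riemannZeta_re {x : ℝ} (hx : 1 < x) :
    HasSum (fun n : ℕ => 1 / (n : ℝ) ^ x) (riemannZeta x).re := by
  have hs := (Real.summable_one_div_nat_rpow.2 hx).hasSum
  convert hs using 1
  rw [zeta_eq_tsum_one_div_nat_cpow (by simpa using hx)]
  have h (n : ℕ) : 1 / (n : ℂ) ^ (x : ℂ) = ((1 / (n : ℝ) ^ x : ℝ) : ℂ) := by
    push_cast [Complex.ofReal_cpow n.cast_nonneg]; rfl
  simp_rw [h, ← Complex.ofReal_tsum, Complex.ofReal_re]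

lemma hasSum_one_div_nat_succ_rpow_riemannZeta_re {x : ℝ} (hx : 1 < x) :
    HasSum (fun n : ℕ => 1 / ((n + 1 : ℕ) : ℝ) ^ x) (riemannZeta x).re := by
  simpa [Real.zero_rpow (by linarith : x ≠ 0)] using
    (hasSum_nat_add_iff' 1).2 (hasSum_one_div_nat_rpow_riemannZeta_re hx)

noncomputable def smallDivTerm (σ : ℝ) (p : ℕ × ℕ) : ℝ :=
  if p.2 ∈ smallDivisors p.1 then p.2 / (p.1 : ℝ) ^ σ else 0

lemma smallDivTerm_nonneg (σ : ℝ) : 0 ≤ smallDivTerm σ := fun p => by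
  unfold smallDivTerm; split_ifs <;> positivity

lemma hasSum_smallDivTerm_fiber (σ : ℝ) (n : ℕ) :
    HasSum (fun d => smallDivTerm σ (n, d)) ((smallDivSum n : ℝ) / (n : ℝ) ^ σ) := by
  have h : HasSum (fun d => smallDivTerm σ (n, d)) (∑ d ∈ smallDivisors n, smallDivTerm σ (n, d)) :=
    hasSum_sum_of_ne_finset_zero fun d hd => if_neg hd
  convert h using 1
  rw [smallDivSum_eq_sum_smallDivisors, Nat.cast_sum, sum_div]
  exact sum_congr rfl fun d hd => (if_pos hd).symm

lemma hasSum_smallDivTerm {σ : ℝ}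
    (hG : Summable fun n : ℕ => (smallDivSum n : ℝ) / (n : ℝ) ^ σ) :
    HasSum (smallDivTerm σ) (∑' n : ℕ, (smallDivSum n : ℝ) / (n : ℝ) ^ σ) := by
  have hH : Summable (smallDivTerm σ) :=
    (summable_prod_of_nonneg (smallDivTerm_nonneg σ)).2
      ⟨fun n => (hasSum_smallDivTerm_fiber σ n).summable,
        by simpa only [(hasSum_smallDivTerm_fiber σ _).tsum_eq] using hG⟩
  convert hH.hasSum using 1
  exact (hH.hasSum.prod_fiberwise (hasSum_smallDivTerm_fiber σ)).tsum_eq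

lemma smallDivTerm_sq_mul (σ : ℝ) {d m : ℕ} (hd : 0 < d) (hm : 0 < m) :
    smallDivTerm σ (d ^ 2 * m, d) = 1 / (d : ℝ) ^ (2 * σ - 1) * (1 / (m : ℝ) ^ σ) := by
  have hmem : d ∈ smallDivisors (d ^ 2 * m) :=
    mem_smallDivisors.2 ⟨Dvd.intro (d * m) (by ring), by positivity, Nat.le_mul_of_pos_right _ hm⟩
  have hd' : (0 : ℝ) < d := by exact_mod_cast hd
  have hm' : (0 : ℝ) < m := by exact_mod_cast hm
  rw [smallDivTerm, if_pos hmem]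
  push_cast
  rw [Real.mul_rpow (by positivity) hm'.le, ← Real.rpow_natCast, ← Real.rpow_mul hd'.le,
    Real.rpow_sub hd', Real.rpow_one]
  field_simp
  ring_nf

lemma riemannZeta_mul_le_tsum_smallDivSum {σ : ℝ} (hσ : 1 < σ)
    (hG : Summable fun n : ℕ => (smallDivSum n : ℝ) / (n : ℝ) ^ σ) :
    (riemannZeta ((2 * σ - 1 : ℝ) : ℂ)).re * (riemannZeta (σ : ℂ)).re
      ≤ ∑' n : ℕ, (smallDivSum n : ℝ) / (n : ℝ) ^ σ := by
  have hu := hasSum_one_div_nat_succ_rpow_riemannZeta_re (x := 2 * σ - 1) (by linarith)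
  have hv := hasSum_one_div_nat_succ_rpow_riemannZeta_re hσ
  have huv := hu.mul hv <| hu.summable.mul_of_nonneg hv.summable
    (fun _ => by positivity) (fun _ => by positivity)
  set e : ℕ × ℕ → ℕ × ℕ := fun p => ((p.1 + 1) ^ 2 * (p.2 + 1), p.1 + 1)
  have he : Function.Injective e := by
    rintro ⟨a, b⟩ ⟨c, d⟩ h
    simp only [e, Prod.mk.injEq] at h
    obtain ⟨h1, h2⟩ := h
    obtain rfl : a = c := by omega
    simpa using Nat.eq_of_mul_eq_mul_left (by positivity) h1
  have hH := hasSum_smallDivTerm hG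
  calc (riemannZeta ((2 * σ - 1 : ℝ) : ℂ)).re * (riemannZeta (σ : ℂ)).re
      = ∑' p, (smallDivTerm σ ∘ e) p := by
        rw [← huv.tsum_eq]
        exact tsum_congr fun p => (smallDivTerm_sq_mul σ p.1.succ_pos p.2.succ_pos).symm
    _ ≤ ∑' p, smallDivTerm σ p := tsum_comp_le_tsum_of_inj hH.summable (smallDivTerm_nonneg σ) he
    _ = _ := hH.tsum_eq

lemma tsum_smallDivSum_le_riemannZeta {σ : ℝ} (hσ : 2 < σ) :
    ∑' n : ℕ, (smallDivSum n : ℝ) / (n : ℝ) ^ σ ≤ (riemannZeta ((σ - 1 : ℝ) : ℂ)).re := by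
  have hζ := hasSum_one_div_nat_rpow_riemannZeta_re (x := σ - 1) (by linarith)
  rw [← hζ.tsum_eq]
  exact (summable_smallDivSum_div_rpow hσ).tsum_le_tsum (smallDivSum_div_rpow_le σ) hζ.summable

theorem smallDivSum_dirichlet_bounds (σ : ℝ) (hσ : 2 < σ) :
    Summable (fun n : ℕ => (smallDivSum n : ℝ) / (n : ℝ) ^ σ) ∧
    (riemannZeta ((2 * σ - 1 : ℝ) : ℂ)).re * (riemannZeta (σ : ℂ)).re
      ≤ ∑' n : ℕ, (smallDivSum n : ℝ) / (n : ℝ) ^ σ ∧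
    ∑' n : ℕ, (smallDivSum n : ℝ) / (n : ℝ) ^ σ ≤ (riemannZeta ((σ - 1 : ℝ) : ℂ)).re :=
  ⟨summable_smallDivSum_div_rpow hσ,
    riemannZeta_mul_le_tsum_smallDivSum (by linarith) (summable_smallDivSum_div_rpow hσ),
    tsum_smallDivSum_le_riemannZeta hσ⟩
end
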